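/- Let Ẽ be a separable Banach space and A the generator of a strongly continuous semigroup on Ẽ with adjoint A* on Ẽ*. Then there exists a countable subset D of D(A*) such that for every x* ∈ D(A*) there is a sequence (x_n*) ⊂ D with x_n* → x* and A*x_n* → A*x* in the weak* topology of Ẽ*. Moreover D can be chosen closed under convex combinations with rational coefficients. -/
import Mathlib


open Filter Topology

section Hull
variable {X : Type*} [AddCommMonoid X] [Module ℝ X]

def ratStep (S : Set X) : Set X :=
  S ∪ Set.range (fun p : ℚ × S × S => (p.1 : ℝ) • (p.2.1 : X) + (1 - (p.1 : ℝ)) • (p.2.2 : X))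

def ratIter (C : Set X) : ℕ → Set X
  | 0 => C
  | (k + 1) => ratStep (ratIter C k)

def ratHull (C : Set X) : Set X := ⋃ k, ratIter C k

lemma ratIter_mono (C : Set X) : Monotone (ratIter C) := by
  apply monotone_nat_of_le_succ
  intro k
  exact Set.subset_union_left

lemma ratIter_countable {C : Set X} (hC : C.Countable) (k : ℕ) : (ratIter C k).Countable := by
  induction k with
  | zero => exact hC
  | succ k ih =>
    haveI := ih.to_subtype
    exact ih.union (Set.countable_range _)

lemma ratHull_countable {C : Set X} (hC : C.Countable) : (ratHull C).Countable :=
  Set.countable_iUnion fun k => ratIter_countable hC k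

lemma subset_ratHull (C : Set X) : C ⊆ ratHull C :=
  Set.subset_iUnion (ratIter C) 0

lemma ratHull_comb {C : Set X} {x y : X} (hx : x ∈ ratHull C) (hy : y ∈ ratHull C) (q : ℚ) :
    (q : ℝ) • x + (1 - (q : ℝ)) • y ∈ ratHull C := by
  obtain ⟨_, ⟨i, rfl⟩, hx⟩ := hx
  obtain ⟨_, ⟨j, rfl⟩, hy⟩ := hy
  have hx' : x ∈ ratIter C (max i j) := ratIter_mono C (le_max_left i j) hx
  have hy' : y ∈ ratIter C (max i j) := ratIter_mono C (le_max_right i j) hy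
  refine Set.mem_iUnion.mpr ⟨max i j + 1, Or.inr ⟨⟨q, ⟨x, hx'⟩, ⟨y, hy'⟩⟩, rfl⟩⟩

end Hull

/-- countable sequentially weak*-dense set -/
lemma exists_seq_dense_weakDual {E : Type*} [NormedAddCommGroup E] [NormedSpace ℝ E]
    [TopologicalSpace.SeparableSpace E] :
    ∃ C : Set (WeakDual ℝ E), C.Countable ∧
      ∀ z : WeakDual ℝ E, ∃ v : ℕ → WeakDual ℝ E, (∀ n, v n ∈ C) ∧
        Tendsto v atTop (𝓝 z) := by
  haveI : Nonempty E := ⟨0⟩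
  set e : ℕ → E := TopologicalSpace.denseSeq E with he
  have hde : DenseRange e := TopologicalSpace.denseRange_denseSeq E
  -- balls
  set B : ℕ → Set (WeakDual ℝ E) :=
    fun n => WeakDual.toStrongDual ⁻¹' Metric.closedBall 0 n with hB
  have hcomp : ∀ n, IsCompact (B n) := fun n => WeakDual.isCompact_closedBall (𝕜 := ℝ) (E := E) 0 n
  have key : ∀ n : ℕ, ∃ s : Set (B n), s.Countable ∧
      ∀ w : B n, ∃ v : ℕ → B n, (∀ m, v m ∈ s) ∧ Tendsto v atTop (𝓝 w) := by
    intro n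
    haveI : CompactSpace (B n) := isCompact_iff_compactSpace.mp (hcomp n)
    set φ : B n → (ℕ → ℝ) := fun f k => (f : WeakDual ℝ E) (e k) with hφ
    have hcont : Continuous φ :=
      continuous_pi fun k => (WeakDual.eval_continuous (e k)).comp continuous_subtype_val
    have hinj : Function.Injective φ := by
      intro f g h
      apply Subtype.ext
      apply DFunLike.ext
      intro x
      have : Set.EqOn (⇑(f : WeakDual ℝ E)) (⇑(g : WeakDual ℝ E)) (Set.range e) := by
        rintro _ ⟨k, rfl⟩
        exact congrFun h k
      have := Continuous.ext_on hde (map_continuous (f : WeakDual ℝ E))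
        (map_continuous (g : WeakDual ℝ E)) this
      exact congrFun this x
    have hce := hcont.isClosedEmbedding hinj
    haveI : SecondCountableTopology (B n) := hce.toIsEmbedding.secondCountableTopology
    obtain ⟨s, hsc, hsd⟩ := TopologicalSpace.exists_countable_dense (B n)
    refine ⟨s, hsc, fun w => ?_⟩
    have : w ∈ closure s := hsd.closure_eq ▸ Set.mem_univ _
    exact mem_closure_iff_seq_limit.mp this
  choose s hsc hsd using key
  refine ⟨⋃ n, (Subtype.val '' s n), Set.countable_iUnion (fun n => ((hsc n).image _)), ?_⟩
  intro z
  set n : ℕ := ⌈‖WeakDual.toStrongDual z‖⌉₊ with hn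
  have hz : z ∈ B n := by
    simp only [hB, Set.mem_preimage, Metric.mem_closedBall, dist_zero_right]
    exact Nat.le_ceil _
  obtain ⟨v, hvmem, hvtend⟩ := hsd n ⟨z, hz⟩
  refine ⟨fun m => (v m : WeakDual ℝ E), fun m => Set.mem_iUnion.mpr ⟨n, ⟨v m, hvmem m, rfl⟩⟩, ?_⟩
  exact ((continuous_subtype_val.tendsto _).comp hvtend)

/-- For the adjoint `A*` of the generator of a strongly continuous semigroup on a separable
Banach space `Ẽ` (encoded via its domain `Dom = range R(λ, A*)` and the weak*-continuous
resolvent `R = R(λ, A*)`), there is a countable set `D ⊆ D(A*)`, closed under rational convex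
combinations, such that every `x* ∈ D(A*)` is the weak* limit of a sequence from `D` whose
images under `A*` also converge weak* to `A* x*`. -/
theorem countable_core_for_adjoint {E : Type*} [NormedAddCommGroup E] [NormedSpace ℝ E]
    [CompleteSpace E] [TopologicalSpace.SeparableSpace E]
    (Dom : Set (WeakDual ℝ E)) (Aadj : WeakDual ℝ E → WeakDual ℝ E)
    (R : WeakDual ℝ E →L[ℝ] WeakDual ℝ E) (lam : ℝ)
    (hrange : Set.range R = Dom)
    (hres : ∀ z : WeakDual ℝ E, Aadj (R z) = lam • R z - z) :
    ∃ D : Set (WeakDual ℝ E), D ⊆ Dom ∧ D.Countable ∧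
      (∀ x ∈ D, ∀ y ∈ D, ∀ q : ℚ, 0 ≤ (q : ℝ) → (q : ℝ) ≤ 1 →
        (q : ℝ) • x + (1 - (q : ℝ)) • y ∈ D) ∧
      ∀ x ∈ Dom, ∃ u : ℕ → WeakDual ℝ E, (∀ n, u n ∈ D) ∧
        Tendsto u atTop (𝓝 x) ∧ Tendsto (fun n => Aadj (u n)) atTop (𝓝 (Aadj x)) := by
  obtain ⟨C, hCc, hCd⟩ := exists_seq_dense_weakDual (E := E)
  refine ⟨R '' ratHull C, ?_, (ratHull_countable hCc).image _, ?_, ?_⟩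
  · rintro _ ⟨a, _, rfl⟩
    rw [← hrange]; exact ⟨a, rfl⟩
  · rintro _ ⟨a, ha, rfl⟩ _ ⟨b, hb, rfl⟩ q _ _
    exact ⟨(q : ℝ) • a + (1 - (q : ℝ)) • b, ratHull_comb ha hb q, by simp [map_add, map_smul]⟩
  · intro x hx
    rw [← hrange] at hx
    obtain ⟨z, rfl⟩ := hx
    obtain ⟨v, hvC, hvt⟩ := hCd z
    refine ⟨fun m => R (v m), fun m => ⟨v m, subset_ratHull C (hvC m), rfl⟩,
      (R.continuous.tendsto z).comp hvt, ?_⟩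
    simp only [hres]
    exact (((R.continuous.tendsto z).comp hvt).const_smul lam).sub hvt
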